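/- Let s(x) = c · x₁^{p₁} ⋯ x_N^{p_N} on the positive orthant with c < 0. If all exponents p_i are positive and ∑_{i=1}^N p_i ≤ 1, then s is convex. -/

import Mathlib

/-!
The product `G x = ∏ xᵢ ^ pᵢ` is concave on the positive orthant: by weighted AM–GM with the
slack weight `1 - ∑ pᵢ` on the value `1`, at every point `z` the graph of `G` lies below the affine
function `x ↦ G z * (∑ pᵢ xᵢ / zᵢ + 1 - ∑ pᵢ)`, which touches it at `z`. A negative multiple of a
concave function is convex.
-/

open Finset

theorem convex_setOf_forall_pos {ι : Type*} : Convex ℝ {x : ι → ℝ | ∀ i, 0 < x i} := by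
  simpa [Set.pi, Set.mem_Ioi] using convex_pi (s := Set.univ) fun i _ => convex_Ioi (0 : ℝ)

variable {ι : Type*} [Fintype ι]

theorem Real.prod_rpow_le_sum_mul_add_one_sub {p t : ι → ℝ} (hp : ∀ i, 0 ≤ p i)
    (hsum : ∑ i, p i ≤ 1) (ht : ∀ i, 0 ≤ t i) :
    ∏ i, t i ^ p i ≤ ∑ i, p i * t i + (1 - ∑ i, p i) := by
  have h := Real.geom_mean_le_arith_mean_weighted univ
    (fun j : Option ι => j.elim (1 - ∑ i, p i) p) (fun j => j.elim 1 t)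
    (fun j _ => j.rec (sub_nonneg.2 hsum) hp) (by simp [Fintype.sum_option])
    (fun j _ => j.rec zero_le_one ht)
  simpa [Fintype.prod_option, Fintype.sum_option, add_comm] using h

theorem Real.prod_rpow_le_prod_rpow_mul_sum_mul_div {p x z : ι → ℝ} (hp : ∀ i, 0 ≤ p i)
    (hsum : ∑ i, p i ≤ 1) (hx : ∀ i, 0 ≤ x i) (hz : ∀ i, 0 < z i) :
    ∏ i, x i ^ p i ≤ (∏ i, z i ^ p i) * (∑ i, p i * (x i / z i) + (1 - ∑ i, p i)) := by
  have hGz : 0 < ∏ i, z i ^ p i := prod_pos fun i _ => Real.rpow_pos_of_pos (hz i) _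
  have hquot : ∏ i, (x i / z i) ^ p i = (∏ i, x i ^ p i) / ∏ i, z i ^ p i := by
    simp_rw [Real.div_rpow (hx _) (hz _).le, prod_div_distrib]
  rw [← div_le_iff₀' hGz, ← hquot]
  exact Real.prod_rpow_le_sum_mul_add_one_sub hp hsum fun i => div_nonneg (hx i) (hz i).le

theorem Real.concaveOn_prod_rpow {p : ι → ℝ} (hp : ∀ i, 0 ≤ p i) (hsum : ∑ i, p i ≤ 1) :
    ConcaveOn ℝ {x : ι → ℝ | ∀ i, 0 < x i} (fun x => ∏ i, x i ^ p i) := by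
  refine ⟨convex_setOf_forall_pos, fun x hx y hy a b ha hb hab => ?_⟩
  set z := a • x + b • y
  have hz : ∀ i, 0 < z i := convex_setOf_forall_pos hx hy ha hb hab
  set A : (ι → ℝ) → ℝ := fun w => ∑ i, p i * (w i / z i) + (1 - ∑ i, p i)
  have hA : a * A x + b * A y = 1 := by
    have hlin : a * ∑ i, p i * (x i / z i) + b * ∑ i, p i * (y i / z i) = ∑ i, p i := by
      rw [mul_sum, mul_sum, ← sum_add_distrib]
      refine sum_congr rfl fun i _ => ?_
      have hzi : z i = a * x i + b * y i := rfl
      field_simp [(hz i).ne']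
      rw [← hzi]
    simp only [A]
    linear_combination hlin + (1 - ∑ i, p i) * hab
  calc a * ∏ i, x i ^ p i + b * ∏ i, y i ^ p i
      ≤ a * ((∏ i, z i ^ p i) * A x) + b * ((∏ i, z i ^ p i) * A y) := by
        gcongr
        · exact Real.prod_rpow_le_prod_rpow_mul_sum_mul_div hp hsum (fun i => (hx i).le) hz
        · exact Real.prod_rpow_le_prod_rpow_mul_sum_mul_div hp hsum (fun i => (hy i).le) hz
    _ = ∏ i, z i ^ p i := by linear_combination (∏ i, z i ^ p i) * hA

theorem negative_signomial_term_convex {N : ℕ} (c : ℝ) (p : Fin N → ℝ)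
    (hc : c < 0) (hp : ∀ i, 0 < p i) (hsum : ∑ i, p i ≤ 1) :
    ConvexOn ℝ {x : Fin N → ℝ | ∀ i, 0 < x i}
      (fun x => c * ∏ i, x i ^ p i) := by
  have h := ((Real.concaveOn_prod_rpow (fun i => (hp i).le) hsum).smul (neg_nonneg.2 hc.le)).neg
  refine h.congr fun x _ => ?_
  simp
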